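/- arXiv:1710.08823 — 3 statements merged into one kernel-verified Lean document; each statement's English description precedes it below -/
import Mathlib

section
/- For nonnegative integers i, j, and lambda, \sum_{k=0}^{i} q^{2k} (q^{j-1};q)_k / (q;q)_k \cdot (1 - q^{1+i+\lambda-k}) = (1-q)\,(q^{j+1};q)_i/(q;q)_i + (1-q^{\lambda})\, q^{1+i}\,(q^{j};q)_i/(q;q)_i. -/
/-- The q-shifted factorial `(a;q)_n = ∏_{m<n} (1 - a q^m)`. -/
noncomputable def qPoch (q a : ℝ) (n : ℕ) : ℝ := ∏ m ∈ Finset.range n, (1 - a * q ^ m)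

lemma qPoch_succ (q a : ℝ) (n : ℕ) :
    qPoch q a (n + 1) = qPoch q a n * (1 - a * q ^ n) := Finset.prod_range_succ _ _

lemma qPoch_shift (q : ℝ) (m n : ℕ) :
    qPoch q (q ^ m) (n + 1) = (1 - q ^ m) * qPoch q (q ^ (m + 1)) n := by
  rw [qPoch, Finset.prod_range_succ']
  simp only [pow_zero, mul_one, qPoch]
  rw [mul_comm]
  congr 1
  refine Finset.prod_congr rfl fun k _ => ?_
  rw [← pow_add, ← pow_add]; congr 2; omega

lemma qPoch_pos (q : ℝ) (hq : 0 < q) (hq1 : q < 1) (m : ℕ) (hm : 1 ≤ m) (n : ℕ) :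
    0 < qPoch q (q ^ m) n := by
  refine Finset.prod_pos fun k _ => ?_
  rw [← pow_add]
  have : q ^ (m + k) < 1 := pow_lt_one₀ hq.le hq1 (by omega)
  linarith

lemma lemC (q : ℝ) (hq : 0 < q) (hq1 : q < 1) (j : ℕ) (hj : 1 ≤ j) (i : ℕ) :
    ∑ k ∈ Finset.range (i + 1), q ^ k * qPoch q (q ^ (j - 1)) k / qPoch q q k
      = qPoch q (q ^ j) i / qPoch q q i := by
  induction i with
  | zero => simp [qPoch]
  | succ n ih =>
    rw [Finset.sum_range_succ, ih]
    have hD : qPoch q q n ≠ 0 := by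
      have := qPoch_pos q hq hq1 1 le_rfl n; simp [pow_one] at this ⊢; linarith
    have hy : (1 : ℝ) - q * q ^ n ≠ 0 := by
      have : q * q ^ n < 1 := by
        have : q ^ (1 + n) < 1 := pow_lt_one₀ hq.le hq1 (by omega)
        rwa [pow_add, pow_one] at this
      linarith
    have hB : qPoch q (q ^ (j - 1)) (n + 1) = (1 - q ^ (j - 1)) * qPoch q (q ^ j) n := by
      have hj1 : j - 1 + 1 = j := by omega
      rw [qPoch_shift, hj1]
    have hqj : q ^ j = q * q ^ (j - 1) := by
      rw [← pow_succ']; congr 1; omega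
    rw [qPoch_succ q q n, qPoch_succ q (q ^ j) n, hB, hqj]
    have h1 : (1 : ℝ) - q * q ^ n ≠ 0 := hy
    field_simp
    ring

lemma lemA (q : ℝ) (hq : 0 < q) (hq1 : q < 1) (j : ℕ) (hj : 1 ≤ j) (i : ℕ) :
    ∑ k ∈ Finset.range (i + 1), q ^ (2 * k) * qPoch q (q ^ (j - 1)) k / qPoch q q k
      = (1 - q) * qPoch q (q ^ (j + 1)) i / qPoch q q i
        + q ^ (1 + i) * qPoch q (q ^ j) i / qPoch q q i := by
  induction i with
  | zero => simp [qPoch]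
  | succ n ih =>
    rw [Finset.sum_range_succ, ih]
    have hD : qPoch q q n ≠ 0 := by
      have := qPoch_pos q hq hq1 1 le_rfl n; simp [pow_one] at this ⊢; linarith
    have hy : (1 : ℝ) - q * q ^ n ≠ 0 := by
      have : q * q ^ n < 1 := by
        have : q ^ (1 + n) < 1 := pow_lt_one₀ hq.le hq1 (by omega)
        rwa [pow_add, pow_one] at this
      linarith
    have hj0 : (1 : ℝ) - q ^ j ≠ 0 := by
      have : q ^ j < 1 := pow_lt_one₀ hq.le hq1 (by omega)
      linarith
    have hB : qPoch q (q ^ (j - 1)) (n + 1) = (1 - q ^ (j - 1)) * qPoch q (q ^ j) n := by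
      have hj1 : j - 1 + 1 = j := by omega
      rw [qPoch_shift, hj1]
    have hqj : q ^ j = q * q ^ (j - 1) := by
      rw [← pow_succ']; congr 1; omega
    have hqj1 : q ^ (j + 1) = q * q ^ j := by rw [pow_succ]; ring
    have hPn : qPoch q (q ^ (j + 1)) n
        = qPoch q (q ^ j) n * (1 - q ^ j * q ^ n) / (1 - q ^ j) := by
      have h := qPoch_shift q j n
      rw [qPoch_succ] at h
      rw [eq_div_iff hj0]
      linear_combination -h
    rw [qPoch_succ q q n, qPoch_succ q (q ^ j) n, qPoch_succ q (q ^ (j + 1)) n, hB, hPn]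
    rw [hqj1, hqj]
    have hj0' : (1 : ℝ) - q * q ^ (j - 1) ≠ 0 := by rw [← hqj]; exact hj0
    field_simp
    ring


/-- for nonnegative integers i, λ and integer j ≥ 1,
`∑_{k=0}^{i} q^{2k} (q^{j-1};q)_k/(q;q)_k (1 - q^{1+i+λ-k})
  = (1-q)(q^{j+1};q)_i/(q;q)_i + (1-q^λ) q^{1+i} (q^j;q)_i/(q;q)_i`. -/
theorem finite_sum_lambda (q : ℝ) (hq : 0 < q) (hq1 : q < 1) (i j lam : ℕ) (hj : 1 ≤ j) :
    ∑ k ∈ Finset.range (i + 1),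
        q ^ (2 * k) * qPoch q (q ^ (j - 1)) k / qPoch q q k * (1 - q ^ (1 + i + lam - k))
      = (1 - q) * qPoch q (q ^ (j + 1)) i / qPoch q q i
        + (1 - q ^ lam) * q ^ (1 + i) * qPoch q (q ^ j) i / qPoch q q i := by
  have hsplit : ∀ k ∈ Finset.range (i + 1),
      q ^ (2 * k) * qPoch q (q ^ (j - 1)) k / qPoch q q k * (1 - q ^ (1 + i + lam - k))
        = q ^ (2 * k) * qPoch q (q ^ (j - 1)) k / qPoch q q k
          - q ^ (1 + lam + i) * (q ^ k * qPoch q (q ^ (j - 1)) k / qPoch q q k) := by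
    intro k hk
    have hk' : k ≤ i := by simpa using Nat.lt_succ_iff.mp (Finset.mem_range.mp hk)
    have hpow : q ^ (1 + i + lam - k) * q ^ (2 * k) = q ^ (1 + lam + i) * q ^ k := by
      rw [← pow_add, ← pow_add]; congr 1; omega
    linear_combination (-(qPoch q (q ^ (j - 1)) k) / qPoch q q k) * hpow
  rw [Finset.sum_congr rfl hsplit, Finset.sum_sub_distrib, ← Finset.mul_sum,
    lemA q hq hq1 j hj i, lemC q hq hq1 j hj i]
  have hpow2 : q ^ (1 + lam + i) = q ^ lam * q ^ (1 + i) := by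
    rw [← pow_add]; congr 1; omega
  rw [hpow2]
  ring
end

section
/- Given any sequence of numbers (\gamma_\lambda), for every nonnegative integer m: \sum_{\lambda=0}^{m} a_0^{(\lambda,\nu)} a_0^{(m-\lambda,\nu)} \gamma_\lambda = \sum_{\theta=0}^{\lfloor m/2 \rfloor} a_0^{(m-2\theta,\nu)} \left( \sum_{\lambda=\theta}^{m-\theta} \gamma_\lambda \right). -/
/-- `a₀^{(n,ν)} = q^{-nν} ∑_{i=0}^{n} (q^{2ν})^i`. -/
noncomputable def a0 (q ν : ℝ) (n : ℕ) : ℝ :=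
  q ^ (-(n : ℝ) * ν) * ∑ i ∈ Finset.range (n + 1), (q ^ (2 * ν)) ^ i

open Finset

noncomputable def fS (x : ℝ) (n : ℕ) : ℝ :=
  ∑ i ∈ Finset.range (n + 1), x ^ (2 * (i : ℤ) - n)

lemma fS_succ (x : ℝ) (hx : x ≠ 0) (n : ℕ) :
    fS x (n + 1) = x ^ ((n : ℤ) + 1) + x⁻¹ * fS x n := by
  unfold fS
  rw [Finset.sum_range_succ, Finset.mul_sum]
  have h1 : ∀ i ∈ Finset.range (n + 1),
      x ^ (2 * (i : ℤ) - ((n : ℕ) + 1 : ℕ)) = x⁻¹ * x ^ (2 * (i : ℤ) - n) := by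
    intro i _
    rw [← zpow_neg_one, ← zpow_add₀ hx]
    congr 1
    push_cast
    ring
  rw [Finset.sum_congr rfl h1]
  rw [show (2 * ((n + 1 : ℕ) : ℤ) - ((n + 1 : ℕ) : ℤ)) = (n : ℤ) + 1 by push_cast; ring]
  ring

lemma fS_clebsch (x : ℝ) (hx : x ≠ 0) :
    ∀ a b : ℕ, a ≤ b →
      fS x a * fS x b = ∑ θ ∈ Finset.range (a + 1), fS x (a + b - 2 * θ) := by
  intro a
  induction a with
  | zero =>
      intro b _
      simp [fS]
  | succ a ih =>
      intro b h
      have ha : a ≤ b := Nat.le_of_succ_le h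
      have key : x ^ ((a : ℤ) + 1) * fS x b
          - ∑ θ ∈ Finset.range (a + 1), x ^ (((a + b - 2 * θ : ℕ) : ℤ) + 1)
          = fS x (b - (a + 1)) := by
        have e1 : x ^ ((a : ℤ) + 1) * fS x b
            = ∑ i ∈ Finset.range (b + 1), x ^ (2 * (i : ℤ) - b + a + 1) := by
          unfold fS
          rw [Finset.mul_sum]
          refine Finset.sum_congr rfl fun i _ => ?_
          rw [← zpow_add₀ hx]
          congr 1
          ring
        rw [e1, show b + 1 = (b - a) + (a + 1) by omega, Finset.sum_range_add]
        have e2 : ∑ i ∈ Finset.range (b - a), x ^ (2 * (i : ℤ) - b + a + 1)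
            = fS x (b - (a + 1)) := by
          unfold fS
          rw [show b - (a + 1) + 1 = b - a by omega]
          refine Finset.sum_congr rfl fun i _ => ?_
          congr 1
          have : ((b - (a + 1) : ℕ) : ℤ) = (b : ℤ) - a - 1 := by omega
          rw [this]
          ring
        have e3 : ∑ θ ∈ Finset.range (a + 1), x ^ (((a + b - 2 * θ : ℕ) : ℤ) + 1)
            = ∑ j ∈ Finset.range (a + 1), x ^ (2 * (((b - a) + j : ℕ) : ℤ) - b + a + 1) := by
          rw [← Finset.sum_range_reflect (fun θ => x ^ (((a + b - 2 * θ : ℕ) : ℤ) + 1)) (a + 1)]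
          refine Finset.sum_congr rfl fun j hj => ?_
          have hj' : j ≤ a := Finset.mem_range_succ_iff.mp hj
          congr 1
          have h1 : ((a + b - 2 * (a + 1 - 1 - j) : ℕ) : ℤ) = (b : ℤ) - a + 2 * j := by omega
          have h2 : (((b - a) + j : ℕ) : ℤ) = (b : ℤ) - a + j := by omega
          rw [h1, h2]
          ring
        rw [e3, add_sub_cancel_right]
        exact e2
      calc fS x (a + 1) * fS x b
          = x ^ ((a : ℤ) + 1) * fS x b + x⁻¹ * (fS x a * fS x b) := by
            rw [fS_succ x hx a]; ring
        _ = x ^ ((a : ℤ) + 1) * fS x b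
            + ∑ θ ∈ Finset.range (a + 1),
                (fS x (a + b - 2 * θ + 1) - x ^ (((a + b - 2 * θ : ℕ) : ℤ) + 1)) := by
            rw [ih b ha, Finset.mul_sum]
            congr 1
            refine Finset.sum_congr rfl fun θ _ => ?_
            have := fS_succ x hx (a + b - 2 * θ)
            linarith
        _ = (x ^ ((a : ℤ) + 1) * fS x b
              - ∑ θ ∈ Finset.range (a + 1), x ^ (((a + b - 2 * θ : ℕ) : ℤ) + 1))
            + ∑ θ ∈ Finset.range (a + 1), fS x (a + b - 2 * θ + 1) := by
            rw [Finset.sum_sub_distrib]; ring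
        _ = fS x (b - (a + 1)) + ∑ θ ∈ Finset.range (a + 1), fS x ((a + 1) + b - 2 * θ) := by
            rw [key]
            congr 1
            refine Finset.sum_congr rfl fun θ hθ => ?_
            have : θ ≤ a := Finset.mem_range_succ_iff.mp hθ
            congr 1
            omega
        _ = ∑ θ ∈ Finset.range (a + 1 + 1), fS x ((a + 1) + b - 2 * θ) := by
            conv_rhs => rw [Finset.sum_range_succ]
            rw [show (a + 1) + b - 2 * (a + 1) = b - (a + 1) by omega]
            exact add_comm _ _

lemma a0_eq (q ν : ℝ) (hq : 0 < q) (n : ℕ) : a0 q ν n = fS (q ^ ν) n := by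
  unfold a0 fS
  rw [Finset.mul_sum]
  refine Finset.sum_congr rfl fun i _ => ?_
  rw [← Real.rpow_natCast (q ^ (2 * ν)) i, ← Real.rpow_mul hq.le, ← Real.rpow_add hq,
    ← Real.rpow_intCast (q ^ ν), ← Real.rpow_mul hq.le]
  congr 1
  push_cast
  ring

lemma fS_clebsch' (x : ℝ) (hx : x ≠ 0) (a b : ℕ) :
    fS x a * fS x b = ∑ θ ∈ Finset.range (min a b + 1), fS x (a + b - 2 * θ) := by
  rcases le_total a b with h | h
  · rw [min_eq_left h]; exact fS_clebsch x hx a b h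
  · rw [min_eq_right h, mul_comm, fS_clebsch x hx b a h]
    refine Finset.sum_congr rfl fun θ _ => ?_
    rw [Nat.add_comm b a]

/-- for any sequence (γ_λ) and every m ≥ 0,
`∑_{λ=0}^{m} a₀^{(λ,ν)} a₀^{(m-λ,ν)} γ_λ
  = ∑_{θ=0}^{⌊m/2⌋} a₀^{(m-2θ,ν)} (∑_{λ=θ}^{m-θ} γ_λ)`. -/
theorem a0_product_sum (q ν : ℝ) (hq : 0 < q) (hq1 : q < 1) (γ : ℕ → ℝ) (m : ℕ) :
    ∑ lam ∈ Finset.range (m + 1), a0 q ν lam * a0 q ν (m - lam) * γ lam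
      = ∑ θ ∈ Finset.range (m / 2 + 1),
          a0 q ν (m - 2 * θ) * ∑ lam ∈ Finset.Icc θ (m - θ), γ lam := by
  set x := q ^ ν with hxdef
  have hx : x ≠ 0 := (Real.rpow_pos_of_pos hq ν).ne'
  have step1 : ∀ lam ∈ Finset.range (m + 1),
      a0 q ν lam * a0 q ν (m - lam) * γ lam
        = ∑ θ ∈ Finset.range (m / 2 + 1),
            (if θ ≤ lam ∧ lam ≤ m - θ then fS x (m - 2 * θ) * γ lam else 0) := by
    intro lam hlam
    have hlm : lam ≤ m := Finset.mem_range_succ_iff.mp hlam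
    rw [a0_eq q ν hq, a0_eq q ν hq, fS_clebsch' x hx]
    rw [show lam + (m - lam) = m by omega]
    have hset : Finset.range (min lam (m - lam) + 1)
        = (Finset.range (m / 2 + 1)).filter (fun θ => θ ≤ lam ∧ lam ≤ m - θ) := by
      ext θ
      simp only [Finset.mem_range, Finset.mem_filter]
      omega
    rw [hset, Finset.sum_filter, Finset.sum_mul]
    refine Finset.sum_congr rfl fun θ _ => ?_
    rw [ite_mul, zero_mul]
  rw [Finset.sum_congr rfl step1, Finset.sum_comm]
  refine Finset.sum_congr rfl fun θ hθ => ?_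
  rw [a0_eq q ν hq, ← hxdef, Finset.mul_sum]
  rw [show Finset.Icc θ (m - θ) = (Finset.range (m + 1)).filter (fun lam => θ ≤ lam ∧ lam ≤ m - θ)
    by ext lam; simp only [Finset.mem_Icc, Finset.mem_range, Finset.mem_filter]; omega]
  rw [Finset.sum_filter]
end

section
/- Jacobi's identity: for 0<q<1, \sum_{i=0}^{\infty} (-1)^i (2i+1) q^{i(i+1)} = \prod_{i=1}^{\infty} (1 - q^{2i})^3; in particular this sum is strictly positive. -/
/-!
Gauss's `q`-binomial theorem for `∏_{j < 2n+2} (1 + z q^(2j+1))`, after the substitution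
`z = x / q^(2n+1)` and clearing denominators, becomes a finite form of Jacobi's triple product:
a polynomial in `x` divisible by `1 + x`. Applying `x d/dx - (n+1)` at the root `x = -1` pairs the
coefficients of `x^(n-m)` and `x^(n+1+m)`, which both carry `q^(m(m+1))`, and gives
`∑_{m ≤ n+1} (-1)^m q^(m(m+1)) ((m+1) [2n+2, n-m] + m [2n+2, n+1+m]) = (q²;q²)_n (q²;q²)_{n+1}`
for the Gaussian binomial coefficients `[N, k]` in base `q²` (with `[N, -1] = 0`). As `n → ∞`
each of these coefficients tends to `1 / (q²;q²)_∞` and all of them are bounded by it, so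
Tannery's theorem turns the finite identity into
`∑ (-1)^m (2m+1) q^(m(m+1)) / (q²;q²)_∞ = (q²;q²)_∞²`.
-/

open Finset Filter Topology

section CommRing

variable {R : Type*} [CommRing R] (t : R)

def gaussBinom : ℕ → ℕ → R
  | _, 0 => 1
  | 0, _ + 1 => 0
  | n + 1, k + 1 => gaussBinom n k + t ^ (k + 1) * gaussBinom n (k + 1)

/-- `(t; t)_k` in the usual notation. -/
def qPochhammer (k : ℕ) : R := ∏ i ∈ range k, (1 - t ^ (i + 1))

@[simp]
lemma gaussBinom_zero_right (n : ℕ) : gaussBinom t n 0 = 1 := by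
  cases n <;> rfl

lemma gaussBinom_succ_succ (n k : ℕ) :
    gaussBinom t (n + 1) (k + 1) = gaussBinom t n k + t ^ (k + 1) * gaussBinom t n (k + 1) := rfl

lemma gaussBinom_eq_zero_of_lt {n k : ℕ} (h : n < k) : gaussBinom t n k = 0 := by
  induction n generalizing k with
  | zero => obtain ⟨k, rfl⟩ := Nat.exists_eq_succ_of_ne_zero h.ne'; rfl
  | succ n ih =>
    obtain ⟨k, rfl⟩ := Nat.exists_eq_succ_of_ne_zero (Nat.ne_zero_of_lt h)
    rw [gaussBinom_succ_succ, ih (by omega), ih (by omega), mul_zero, add_zero]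

@[simp]
lemma gaussBinom_self (n : ℕ) : gaussBinom t n n = 1 := by
  induction n with
  | zero => rfl
  | succ n ih => rw [gaussBinom_succ_succ, ih, gaussBinom_eq_zero_of_lt t n.lt_succ_self]; ring

lemma qPochhammer_succ (k : ℕ) : qPochhammer t (k + 1) = qPochhammer t k * (1 - t ^ (k + 1)) :=
  prod_range_succ _ _

lemma gaussBinom_mul_qPochhammer_mul_qPochhammer {n k : ℕ} (h : k ≤ n) :
    gaussBinom t n k * qPochhammer t k * qPochhammer t (n - k) = qPochhammer t n := by
  induction n generalizing k with
  | zero =>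
    obtain rfl : k = 0 := by omega
    simp [qPochhammer]
  | succ n ih =>
    rcases k with _ | k
    · simp [qPochhammer]
    have hk : k ≤ n := by omega
    have hright :
        t ^ (k + 1) * gaussBinom t n (k + 1) * qPochhammer t (k + 1) * qPochhammer t (n - k)
          = t ^ (k + 1) * (1 - t ^ (n - k)) * qPochhammer t n := by
      rcases hk.eq_or_lt with rfl | hlt
      · simp [gaussBinom_eq_zero_of_lt t k.lt_succ_self]
      · rw [show n - k = n - (k + 1) + 1 by omega, qPochhammer_succ t (n - (k + 1)),
          show n - (k + 1) + 1 = n - k by omega, ← ih hlt]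
        ring
    have hpow : t ^ (k + 1) * t ^ (n - k) = t ^ (n + 1) := by rw [← pow_add]; congr 1; omega
    rw [gaussBinom_succ_succ, Nat.add_sub_add_right]
    linear_combination (1 - t ^ (k + 1)) * ih hk + hright
      + gaussBinom t n k * qPochhammer t (n - k) * qPochhammer_succ t k - qPochhammer_succ t n
      - qPochhammer t n * hpow

theorem prod_one_add_mul_pow_eq_sum_gaussBinom (q z : R) (n : ℕ) :
    ∏ j ∈ range n, (1 + z * q ^ (2 * j + 1)) =
      ∑ k ∈ range (n + 1), gaussBinom (q ^ 2) n k * q ^ (k ^ 2) * z ^ k := by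
  induction n generalizing z with
  | zero => simp
  | succ n ih =>
    have hshift : ∀ j, 1 + z * q ^ (2 * (j + 1) + 1) = 1 + z * q ^ 2 * q ^ (2 * j + 1) :=
      fun j => by ring
    have hlow : ∑ k ∈ range (n + 1), gaussBinom (q ^ 2) n k * q ^ (k ^ 2) * (z * q ^ 2) ^ k
        = 1 + ∑ k ∈ range (n + 1),
          (q ^ 2) ^ (k + 1) * gaussBinom (q ^ 2) n (k + 1) * q ^ ((k + 1) ^ 2) * z ^ (k + 1) := by
      conv_rhs => rw [sum_range_succ, gaussBinom_eq_zero_of_lt _ n.lt_succ_self]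
      rw [sum_range_succ', gaussBinom_zero_right, mul_zero, zero_mul, zero_mul, add_zero, add_comm]
      exact congrArg₂ _ (by simp) (sum_congr rfl fun k _ => by ring)
    have hhigh :
        (∑ k ∈ range (n + 1), gaussBinom (q ^ 2) n k * q ^ (k ^ 2) * (z * q ^ 2) ^ k) * (z * q)
          = ∑ k ∈ range (n + 1), gaussBinom (q ^ 2) n k * q ^ ((k + 1) ^ 2) * z ^ (k + 1) := by
      rw [sum_mul]
      exact sum_congr rfl fun k _ => by ring
    rw [prod_range_succ', funext hshift, ih, sum_range_succ' _ (n + 1)]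
    simp only [gaussBinom_succ_succ, gaussBinom_zero_right, add_mul, sum_add_distrib]
    linear_combination hlow + hhigh

end CommRing

lemma prod_range_pow_two_mul_succ {M : Type*} [CommMonoid M] (q : M) (n : ℕ) :
    ∏ j ∈ range n, q ^ (2 * (j + 1)) = q ^ (n * (n + 1)) := by
  induction n with
  | zero => simp
  | succ n ih => rw [prod_range_succ, ih, ← pow_add]; ring_nf

section Field

variable {K : Type*} [Field K] {q : K}

lemma pow_mul_prod_one_add_div_eq (hq : q ≠ 0) (n : ℕ) (x : K) :
    q ^ (n * (n + 1)) * ∏ j ∈ range (2 * n + 2), (1 + x / q ^ (2 * n + 1) * q ^ (2 * j + 1)) =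
      (∏ i ∈ range n, (x + q ^ (2 * (i + 1)))) * ∏ i ∈ range (n + 2), (1 + x * q ^ (2 * i)) := by
  have hlow : ∀ j ∈ range n, 1 + x / q ^ (2 * n + 1) * q ^ (2 * (n - 1 - j) + 1)
      = (x + q ^ (2 * (j + 1))) / q ^ (2 * (j + 1)) := by
    intro j hj
    have h : q ^ (2 * (n - 1 - j) + 1) * q ^ (2 * (j + 1)) = q ^ (2 * n + 1) := by
      rw [← pow_add]; congr 1; have := mem_range.1 hj; omega
    field_simp
    linear_combination x * h
  have hhigh : ∀ j ∈ range (n + 2), 1 + x / q ^ (2 * n + 1) * q ^ (2 * (n + j) + 1)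
      = 1 + x * q ^ (2 * j) := by
    intro j _
    rw [show 2 * (n + j) + 1 = (2 * n + 1) + 2 * j by ring, pow_add q (2 * n + 1)]
    field_simp
  rw [show 2 * n + 2 = n + (n + 2) by ring, prod_range_add, prod_congr rfl hhigh,
    ← prod_range_reflect, prod_congr rfl hlow, prod_div_distrib, prod_range_pow_two_mul_succ]
  field_simp

theorem prod_add_mul_prod_one_add_eq_sum_gaussBinom (hq : q ≠ 0) (n : ℕ) (x : K) :
    (∏ i ∈ range n, (x + q ^ (2 * (i + 1)))) * ∏ i ∈ range (n + 2), (1 + x * q ^ (2 * i)) =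
      ∑ k ∈ range (2 * n + 3),
        q ^ (n * (n + 1)) * gaussBinom (q ^ 2) (2 * n + 2) k * q ^ (k ^ 2) / q ^ ((2 * n + 1) * k)
          * x ^ k := by
  rw [← pow_mul_prod_one_add_div_eq hq, prod_one_add_mul_pow_eq_sum_gaussBinom, mul_sum]
  refine sum_congr rfl fun k _ => ?_
  rw [div_pow, ← pow_mul]
  field_simp

end Field

lemma sum_natCast_mul_mul_pow_eq_of_eq_sub_mul {𝕜 : Type*} [NontriviallyNormedField 𝕜]
    {a : ℕ → 𝕜} {P : 𝕜 → 𝕜} {r : 𝕜} (s : Finset ℕ)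
    (h : ∀ x, ∑ k ∈ s, a k * x ^ k = (x - r) * P x) (hP : DifferentiableAt 𝕜 P r) :
    ∑ k ∈ s, k * a k * r ^ k = r * P r := by
  have hsum : HasDerivAt (fun x => ∑ k ∈ s, a k * x ^ k) (∑ k ∈ s, a k * (k * r ^ (k - 1))) r :=
    HasDerivAt.fun_sum fun k _ => (hasDerivAt_pow k r).const_mul (a k)
  have hprod : HasDerivAt (fun x => (x - r) * P x) (1 * P r + (r - r) * deriv P r) r :=
    ((hasDerivAt_id r).sub_const r).mul hP.hasDerivAt
  have hderiv :=
    (hsum.congr_of_eventuallyEq (Eventually.of_forall fun x => (h x).symm)).unique hprod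
  rw [sub_self, zero_mul, add_zero, one_mul] at hderiv
  rw [← hderiv, mul_sum]
  refine sum_congr rfl fun k _ => ?_
  rcases k with _ | k
  · simp
  · rw [Nat.add_sub_cancel, pow_succ]; ring

lemma sum_range_two_mul_add_three {M : Type*} [AddCommMonoid M] (f : ℕ → M) (n : ℕ) :
    ∑ k ∈ range (2 * n + 3), f k =
      ∑ m ∈ range (n + 1), f (n - m) + ∑ m ∈ range (n + 2), f (n + 1 + m) := by
  rw [show 2 * n + 3 = (n + 1) + (n + 2) by ring, sum_range_add, ← sum_range_reflect f (n + 1)]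
  simp only [Nat.add_sub_cancel]

def finiteJacobiTerm {R : Type*} [CommRing R] (q : R) (n m : ℕ) : R :=
  (-1) ^ m * q ^ (m * (m + 1)) *
    ((m + 1) * gaussBinom (q ^ 2) (2 * n + 2) (n - m)
      + m * gaussBinom (q ^ 2) (2 * n + 2) (n + 1 + m))

section FiniteIdentity

variable {𝕜 : Type*} [NontriviallyNormedField 𝕜] {q : 𝕜}

/-- `x d/dx - (n + 1)` applied to the finite triple product at its root `x = -1`. -/
lemma sum_centered_mul_neg_one_pow_eq_qPochhammer_mul (hq : q ≠ 0) (n : ℕ) :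
    ∑ k ∈ range (2 * n + 3), ((k : 𝕜) - (n + 1)) *
        (q ^ (n * (n + 1)) * gaussBinom (q ^ 2) (2 * n + 2) k * q ^ (k ^ 2) / q ^ ((2 * n + 1) * k))
          * (-1) ^ k
      = (-1) ^ (n + 1) * (qPochhammer (q ^ 2) n * qPochhammer (q ^ 2) (n + 1)) := by
  set a : ℕ → 𝕜 := fun k =>
    q ^ (n * (n + 1)) * gaussBinom (q ^ 2) (2 * n + 2) k * q ^ (k ^ 2) / q ^ ((2 * n + 1) * k)
  set P : 𝕜 → 𝕜 := fun x =>
    (∏ i ∈ range n, (x + q ^ (2 * (i + 1)))) * ∏ i ∈ range (n + 1), (1 + x * q ^ (2 * (i + 1)))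
  have hfactor : ∀ x, ∑ k ∈ range (2 * n + 3), a k * x ^ k = (x - -1) * P x := fun x => by
    rw [← prod_add_mul_prod_one_add_eq_sum_gaussBinom hq, prod_range_succ']
    simp only [P]
    ring
  have hroot : ∑ k ∈ range (2 * n + 3), a k * (-1) ^ k = 0 := by simpa using hfactor (-1)
  have heuler := sum_natCast_mul_mul_pow_eq_of_eq_sub_mul _ hfactor (by fun_prop)
  have hP : P (-1) = (-1) ^ n * qPochhammer (q ^ 2) n * qPochhammer (q ^ 2) (n + 1) := by
    have hneg : ∀ i, -1 + q ^ (2 * (i + 1)) = -1 * (1 - (q ^ 2) ^ (i + 1)) := fun i => by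
      rw [← pow_mul]; ring
    have hpos : ∀ i, 1 + -1 * q ^ (2 * (i + 1)) = 1 - (q ^ 2) ^ (i + 1) := fun i => by
      rw [← pow_mul]; ring
    simp only [P, hneg, hpos, prod_mul_distrib, prod_const, card_range, qPochhammer]
  have hsplit : ∑ k ∈ range (2 * n + 3), ((k : 𝕜) - (n + 1)) * a k * (-1) ^ k
      = ∑ k ∈ range (2 * n + 3), k * a k * (-1) ^ k
        - (n + 1) * ∑ k ∈ range (2 * n + 3), a k * (-1) ^ k := by
    rw [mul_sum, ← sum_sub_distrib]
    exact sum_congr rfl fun k _ => by ring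
  rw [hsplit, heuler, hroot, hP]
  ring

theorem sum_finiteJacobiTerm_add_eq_qPochhammer_mul (hq : q ≠ 0) (n : ℕ) :
    ∑ m ∈ range (n + 1), finiteJacobiTerm q n m + (-1) ^ (n + 1) * (n + 1) * q ^ ((n + 1) * (n + 2))
      = qPochhammer (q ^ 2) n * qPochhammer (q ^ 2) (n + 1) := by
  have hcentered := sum_centered_mul_neg_one_pow_eq_qPochhammer_mul hq n
  set a : ℕ → 𝕜 := fun k =>
    q ^ (n * (n + 1)) * gaussBinom (q ^ 2) (2 * n + 2) k * q ^ (k ^ 2) / q ^ ((2 * n + 1) * k)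
  have hcoeff : ∀ k m, k ^ 2 + n * (n + 1) = m * (m + 1) + (2 * n + 1) * k →
      a k = q ^ (m * (m + 1)) * gaussBinom (q ^ 2) (2 * n + 2) k := fun k m hkm => by
    have hpow := congrArg (q ^ ·) hkm
    simp only [pow_add] at hpow
    rw [div_eq_iff (pow_ne_zero _ hq)]
    linear_combination gaussBinom (q ^ 2) (2 * n + 2) k * hpow
  have hlow : ∀ m ∈ range (n + 1), (((n - m : ℕ) : 𝕜) - (n + 1)) * a (n - m) * (-1) ^ (n - m)
      = (-1) ^ (n + 1) * ((-1) ^ m * q ^ (m * (m + 1))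
        * ((m + 1) * gaussBinom (q ^ 2) (2 * n + 2) (n - m))) := by
    intro m hm
    have hmn : m ≤ n := Nat.lt_succ_iff.1 (mem_range.1 hm)
    have hsign : (-1 : 𝕜) ^ (n - m) = (-1) ^ (n + m) := by
      simp [show n + m = n - m + 2 * m by omega, pow_add]
    rw [hcoeff (n - m) m (by zify [hmn]; ring), hsign, Nat.cast_sub hmn]
    ring
  have hhigh : ∀ m ∈ range (n + 2),
      (((n + 1 + m : ℕ) : 𝕜) - (n + 1)) * a (n + 1 + m) * (-1) ^ (n + 1 + m)
        = (-1) ^ (n + 1) * ((-1) ^ m * q ^ (m * (m + 1))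
          * (m * gaussBinom (q ^ 2) (2 * n + 2) (n + 1 + m))) := by
    intro m _
    rw [hcoeff (n + 1 + m) m (by ring), pow_add]
    push_cast
    ring
  rw [sum_range_two_mul_add_three, sum_congr rfl hlow, sum_congr rfl hhigh,
    sum_range_succ _ (n + 1), ← mul_sum, ← mul_sum, show n + 1 + (n + 1) = 2 * n + 2 by ring,
    gaussBinom_self] at hcentered
  refine mul_left_cancel₀ (pow_ne_zero (n + 1) (neg_ne_zero.2 one_ne_zero) : (-1 : 𝕜) ^ (n + 1) ≠ 0)
    ?_
  rw [← hcentered]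
  simp only [finiteJacobiTerm, mul_add, sum_add_distrib]
  push_cast
  ring

end FiniteIdentity

section NormedRing

variable {R : Type*} [NormedCommRing R] [NormOneClass R] [CompleteSpace R] {t : R}

lemma multipliable_one_sub_pow_succ (ht : ‖t‖ < 1) : Multipliable fun i => 1 - t ^ (i + 1) := by
  have hsum : Summable fun i => ‖-t ^ (i + 1)‖ := by
    refine Summable.of_nonneg_of_le (fun _ => norm_nonneg _) (fun i => ?_)
      ((summable_geometric_of_lt_one (norm_nonneg t) ht).mul_left ‖t‖)
    rw [norm_neg, ← pow_succ']
    exact norm_pow_le t (i + 1)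
  simpa [sub_eq_add_neg] using multipliable_one_add_of_summable hsum

lemma tendsto_qPochhammer (ht : ‖t‖ < 1) :
    Tendsto (qPochhammer t) atTop (𝓝 (∏' i, (1 - t ^ (i + 1)))) :=
  (multipliable_one_sub_pow_succ ht).hasProd.tendsto_prod_nat

end NormedRing

section UnitInterval

variable {t : ℝ}

lemma one_sub_pow_succ_pos (ht0 : 0 ≤ t) (ht1 : t < 1) (i : ℕ) : 0 < 1 - t ^ (i + 1) :=
  sub_pos.2 (pow_lt_one₀ ht0 ht1 i.succ_ne_zero)

lemma qPochhammer_pos (ht0 : 0 ≤ t) (ht1 : t < 1) (k : ℕ) : 0 < qPochhammer t k :=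
  prod_pos fun i _ => one_sub_pow_succ_pos ht0 ht1 i

lemma qPochhammer_antitone (ht0 : 0 ≤ t) (ht1 : t < 1) : Antitone (qPochhammer t) :=
  antitone_nat_of_succ_le fun k => by
    rw [qPochhammer_succ]
    exact mul_le_of_le_one_right (qPochhammer_pos ht0 ht1 k).le
      (sub_le_self _ (pow_nonneg ht0 _))

lemma tprod_one_sub_pow_succ_pos (ht0 : 0 ≤ t) (ht1 : t < 1) : 0 < ∏' i, (1 - t ^ (i + 1)) := by
  have hlog : Summable fun i => Real.log (1 + -t ^ (i + 1)) :=
    Real.summable_log_one_add_of_summable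
      (((summable_geometric_of_lt_one ht0 ht1).mul_left t).neg.congr fun i => by rw [pow_succ'])
  rw [← Real.rexp_tsum_eq_tprod (one_sub_pow_succ_pos ht0 ht1)
    (by simpa [sub_eq_add_neg] using hlog)]
  exact Real.exp_pos _

lemma tprod_one_sub_pow_succ_le_qPochhammer (ht0 : 0 ≤ t) (ht1 : t < 1) (k : ℕ) :
    ∏' i, (1 - t ^ (i + 1)) ≤ qPochhammer t k :=
  (qPochhammer_antitone ht0 ht1).le_of_tendsto
    (tendsto_qPochhammer (by rwa [Real.norm_of_nonneg ht0])) k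

lemma gaussBinom_eq_div (ht0 : 0 ≤ t) (ht1 : t < 1) {n k : ℕ} (h : k ≤ n) :
    gaussBinom t n k = qPochhammer t n / (qPochhammer t k * qPochhammer t (n - k)) := by
  rw [eq_div_iff (mul_pos (qPochhammer_pos ht0 ht1 k) (qPochhammer_pos ht0 ht1 _)).ne', ← mul_assoc,
    gaussBinom_mul_qPochhammer_mul_qPochhammer t h]

lemma gaussBinom_nonneg (ht0 : 0 ≤ t) (ht1 : t < 1) (n k : ℕ) : 0 ≤ gaussBinom t n k := by
  rcases le_or_gt k n with h | h
  · rw [gaussBinom_eq_div ht0 ht1 h]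
    exact div_nonneg (qPochhammer_pos ht0 ht1 n).le
      (mul_pos (qPochhammer_pos ht0 ht1 k) (qPochhammer_pos ht0 ht1 _)).le
  · rw [gaussBinom_eq_zero_of_lt t h]

lemma gaussBinom_le_inv_tprod (ht0 : 0 ≤ t) (ht1 : t < 1) (n k : ℕ) :
    gaussBinom t n k ≤ (∏' i, (1 - t ^ (i + 1)))⁻¹ := by
  rcases le_or_gt k n with h | h
  · have hk := qPochhammer_pos ht0 ht1 k
    have hnk := qPochhammer_pos ht0 ht1 (n - k)
    calc gaussBinom t n k = qPochhammer t n / (qPochhammer t k * qPochhammer t (n - k)) :=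
          gaussBinom_eq_div ht0 ht1 h
      _ ≤ qPochhammer t (n - k) / (qPochhammer t k * qPochhammer t (n - k)) := by
          gcongr; exact qPochhammer_antitone ht0 ht1 (Nat.sub_le n k)
      _ = (qPochhammer t k)⁻¹ := by field_simp
      _ ≤ (∏' i, (1 - t ^ (i + 1)))⁻¹ :=
          inv_anti₀ (tprod_one_sub_pow_succ_pos ht0 ht1)
            (tprod_one_sub_pow_succ_le_qPochhammer ht0 ht1 k)
  · rw [gaussBinom_eq_zero_of_lt t h]
    exact inv_nonneg.2 (tprod_one_sub_pow_succ_pos ht0 ht1).le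

lemma tendsto_gaussBinom (ht0 : 0 ≤ t) (ht1 : t < 1) {α : Type*} {l : Filter α} {N k : α → ℕ}
    (hk : Tendsto k l atTop) (hNk : Tendsto (fun x => N x - k x) l atTop) :
    Tendsto (fun x => gaussBinom t (N x) (k x)) l (𝓝 (∏' i, (1 - t ^ (i + 1)))⁻¹) := by
  set E := ∏' i, (1 - t ^ (i + 1))
  have hE := tprod_one_sub_pow_succ_pos ht0 ht1
  have hD := tendsto_qPochhammer (t := t) (by rwa [Real.norm_of_nonneg ht0])
  have hN : Tendsto N l atTop := tendsto_atTop_mono (fun x => Nat.sub_le _ _) hNk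
  have hlim := (hD.comp hN).div ((hD.comp hk).mul (hD.comp hNk)) (mul_pos hE hE).ne'
  rw [show E / (E * E) = E⁻¹ by field_simp] at hlim
  refine hlim.congr' ?_
  filter_upwards [hNk.eventually_ge_atTop 1] with x hx
  exact (gaussBinom_eq_div ht0 ht1 (by omega)).symm

end UnitInterval

section Limit

variable {q : ℝ}

lemma summable_two_mul_add_one_mul_pow (hq0 : 0 ≤ q) (hq1 : q < 1) :
    Summable fun m : ℕ => (2 * (m : ℝ) + 1) * q ^ (m * (m + 1)) := by
  have hgeom : Summable fun m : ℕ => 2 * ((m : ℝ) ^ 1 * q ^ m) + q ^ m :=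
    ((summable_pow_mul_geometric_of_norm_lt_one (R := ℝ) 1
      (by rwa [Real.norm_of_nonneg hq0])).mul_left 2).add (summable_geometric_of_lt_one hq0 hq1)
  refine hgeom.of_nonneg_of_le (fun m => by positivity) fun m => ?_
  calc (2 * (m : ℝ) + 1) * q ^ (m * (m + 1)) ≤ (2 * (m : ℝ) + 1) * q ^ m :=
        mul_le_mul_of_nonneg_left
          (pow_le_pow_of_le_one hq0 hq1.le (Nat.le_mul_of_pos_right m m.succ_pos)) (by positivity)
    _ = 2 * ((m : ℝ) ^ 1 * q ^ m) + q ^ m := by ring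

lemma norm_finiteJacobiTerm_le (hq0 : 0 ≤ q) (hq1 : q < 1) (n m : ℕ) :
    ‖finiteJacobiTerm q n m‖ ≤
      (2 * (m : ℝ) + 1) * q ^ (m * (m + 1)) * (∏' i, (1 - (q ^ 2) ^ (i + 1)))⁻¹ := by
  have ht0 : 0 ≤ q ^ 2 := sq_nonneg q
  have ht1 : q ^ 2 < 1 := pow_lt_one₀ hq0 hq1 two_ne_zero
  have hlow := gaussBinom_le_inv_tprod ht0 ht1 (2 * n + 2) (n - m)
  have hhigh := gaussBinom_le_inv_tprod ht0 ht1 (2 * n + 2) (n + 1 + m)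
  have hlow0 := gaussBinom_nonneg ht0 ht1 (2 * n + 2) (n - m)
  have hhigh0 := gaussBinom_nonneg ht0 ht1 (2 * n + 2) (n + 1 + m)
  have hm : (0 : ℝ) ≤ m := m.cast_nonneg
  have hinner : ((m : ℝ) + 1) * gaussBinom (q ^ 2) (2 * n + 2) (n - m)
      + m * gaussBinom (q ^ 2) (2 * n + 2) (n + 1 + m)
        ≤ (2 * m + 1) * (∏' i, (1 - (q ^ 2) ^ (i + 1)))⁻¹ := by
    nlinarith
  rw [finiteJacobiTerm, norm_mul, norm_mul, norm_pow, norm_neg, norm_one, one_pow, one_mul,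
    Real.norm_of_nonneg (by positivity), Real.norm_of_nonneg (by positivity)]
  calc _ ≤ q ^ (m * (m + 1)) * ((2 * m + 1) * (∏' i, (1 - (q ^ 2) ^ (i + 1)))⁻¹) :=
        mul_le_mul_of_nonneg_left hinner (by positivity)
    _ = _ := by ring

lemma tendsto_finiteJacobiTerm (hq0 : 0 ≤ q) (hq1 : q < 1) (m : ℕ) :
    Tendsto (fun n => finiteJacobiTerm q n m) atTop
      (𝓝 ((-1) ^ m * (2 * (m : ℝ) + 1) * q ^ (m * (m + 1))
        * (∏' i, (1 - (q ^ 2) ^ (i + 1)))⁻¹)) := by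
  have ht0 : 0 ≤ q ^ 2 := sq_nonneg q
  have ht1 : q ^ 2 < 1 := pow_lt_one₀ hq0 hq1 two_ne_zero
  have hlow : Tendsto (fun n => gaussBinom (q ^ 2) (2 * n + 2) (n - m)) atTop _ :=
    tendsto_gaussBinom ht0 ht1 (tendsto_sub_atTop_nat m)
      (tendsto_atTop_mono (fun n => by omega) (tendsto_add_atTop_nat 2))
  have hhigh : Tendsto (fun n => gaussBinom (q ^ 2) (2 * n + 2) (n + 1 + m)) atTop _ :=
    tendsto_gaussBinom ht0 ht1
    (tendsto_atTop_mono (f := fun n => n) (fun n => show n ≤ n + 1 + m by omega) tendsto_id)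
    (tendsto_atTop_mono (fun n => show n - m ≤ 2 * n + 2 - (n + 1 + m) by omega)
      (tendsto_sub_atTop_nat m))
  have hlim := ((hlow.const_mul ((m : ℝ) + 1)).add (hhigh.const_mul (m : ℝ))).const_mul
    ((-1) ^ m * q ^ (m * (m + 1)))
  rw [← add_mul, ← mul_assoc, show (m : ℝ) + 1 + m = 2 * m + 1 by ring,
    mul_right_comm _ _ (_ + _)] at hlim
  exact hlim

lemma tendsto_sum_finiteJacobiTerm (hq0 : 0 ≤ q) (hq1 : q < 1) :
    Tendsto (fun n => ∑ m ∈ range (n + 1), finiteJacobiTerm q n m) atTop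
      (𝓝 (∑' m : ℕ, (-1) ^ m * (2 * (m : ℝ) + 1) * q ^ (m * (m + 1))
        * (∏' i, (1 - (q ^ 2) ^ (i + 1)))⁻¹)) := by
  set f : ℕ → ℕ → ℝ := fun n m => if m < n + 1 then finiteJacobiTerm q n m else 0
  have hf : ∀ n, ∑' m, f n m = ∑ m ∈ range (n + 1), finiteJacobiTerm q n m := fun n =>
    (tsum_eq_sum fun m hm => if_neg (mt mem_range.2 hm)).trans
      (sum_congr rfl fun m hm => if_pos (mem_range.1 hm))
  simp_rw [← hf]
  refine tendsto_tsum_of_dominated_convergence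
    ((summable_two_mul_add_one_mul_pow hq0 hq1).mul_right (∏' i, (1 - (q ^ 2) ^ (i + 1)))⁻¹)
    (fun m => ?_) (Eventually.of_forall fun n m => ?_)
  · refine (tendsto_finiteJacobiTerm hq0 hq1 m).congr' ?_
    filter_upwards [eventually_gt_atTop m] with n hn
    exact (if_pos (by omega)).symm
  · simp only [f]
    split_ifs
    · exact norm_finiteJacobiTerm_le hq0 hq1 n m
    · exact norm_zero.trans_le ((norm_nonneg _).trans (norm_finiteJacobiTerm_le hq0 hq1 n m))

theorem tsum_neg_one_pow_mul_eq_tprod_pow_three (hq0 : 0 < q) (hq1 : q < 1) :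
    ∑' m : ℕ, (-1) ^ m * (2 * (m : ℝ) + 1) * q ^ (m * (m + 1))
      = (∏' i, (1 - (q ^ 2) ^ (i + 1))) ^ 3 := by
  have ht0 : 0 ≤ q ^ 2 := sq_nonneg q
  have ht1 : q ^ 2 < 1 := pow_lt_one₀ hq0.le hq1 two_ne_zero
  have hD := tendsto_qPochhammer (t := q ^ 2) (by rwa [Real.norm_of_nonneg ht0])
  have hsummand : Tendsto (fun n : ℕ => (-1) ^ (n + 1) * ((n : ℝ) + 1) * q ^ ((n + 1) * (n + 2)))
      atTop (𝓝 0) := by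
    refine squeeze_zero_norm (fun n => ?_)
      ((summable_two_mul_add_one_mul_pow hq0.le hq1).tendsto_atTop_zero.comp
        (tendsto_add_atTop_nat 1))
    rw [norm_mul, norm_mul, norm_pow, norm_neg, norm_one, one_pow, one_mul, Function.comp_apply,
      Real.norm_of_nonneg (by positivity), Real.norm_of_nonneg (by positivity)]
    push_cast
    gcongr
    linarith
  have hlim := ((hD.mul (hD.comp (tendsto_add_atTop_nat 1))).sub hsummand).congr fun n =>
    (eq_sub_of_add_eq (sum_finiteJacobiTerm_add_eq_qPochhammer_mul hq0.ne' n)).symm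
  rw [sub_zero] at hlim
  have heq := tendsto_nhds_unique (tendsto_sum_finiteJacobiTerm hq0.le hq1) hlim
  rw [tsum_mul_right, ← div_eq_mul_inv, div_eq_iff (tprod_one_sub_pow_succ_pos ht0 ht1).ne'] at heq
  rw [heq]
  ring

end Limit

/-- Jacobi's identity: for 0 < q < 1,
`∑_{i=0}^∞ (-1)^i (2i+1) q^{i(i+1)} = ∏_{i=1}^∞ (1-q^{2i})³`, and the sum is positive. -/
theorem jacobi_identity (q : ℝ) (hq : 0 < q) (hq1 : q < 1) :
    (∑' i : ℕ, (-1 : ℝ) ^ i * (2 * (i : ℝ) + 1) * q ^ (i * (i + 1))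
        = ∏' i : ℕ, (1 - q ^ (2 * (i + 1))) ^ 3) ∧
    0 < ∑' i : ℕ, (-1 : ℝ) ^ i * (2 * (i : ℝ) + 1) * q ^ (i * (i + 1)) := by
  have ht0 : 0 ≤ q ^ 2 := sq_nonneg q
  have ht1 : q ^ 2 < 1 := pow_lt_one₀ hq.le hq1 two_ne_zero
  have hcube : ∏' i : ℕ, (1 - q ^ (2 * (i + 1))) ^ 3 = (∏' i : ℕ, (1 - (q ^ 2) ^ (i + 1))) ^ 3 := by
    simp_rw [pow_mul]
    exact (multipliable_one_sub_pow_succ (t := q ^ 2)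
      (by rwa [Real.norm_of_nonneg ht0])).tprod_pow 3
  rw [tsum_neg_one_pow_mul_eq_tprod_pow_three hq hq1, hcube]
  exact ⟨rfl, pow_pos (tprod_one_sub_pow_succ_pos ht0 ht1) 3⟩
end
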